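/- Let (P, V_term) be a plan and (W, V_goal) a planning problem with P and W akin. Let P* be the powerset determinization of P with V*_term = { S ∈ V(P*) : S ∩ V_term ≠ ∅ }, and let W* be the powerset determinization of W with V*_goal = { S ∈ V(W*) : S ⊆ V_goal }. Then the following are equivalent: (1) (P, V_term) solves (W, V_goal); (2) (P*, V*_term) solves (W, V_goal); (3) (P, V_term) solves (W*, V*_goal); (4) (P*, V*_term) solves (W*, V*_goal). -/

import Mathlib

/-! Formalization of interaction languages and procrustean graphs (p-graphs). -/

section InteractionLanguages

variable {U Y U' Y' : Type}

/-- A list of events (events are `U ⊕ Y`: actions on the left, observations on the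
right) alternates kinds, the first element being an action iff `b = true`. -/
def AltFrom : Bool → List (U ⊕ Y) → Prop
  | _, [] => True
  | b, e :: s => e.isLeft = b ∧ AltFrom (!b) s

/-- A set of event sequences is prefix-closed. -/
def PrefixClosed (L : Set (List (U ⊕ Y))) : Prop :=
  ∀ s ∈ L, ∀ t : List (U ⊕ Y), t <+: s → t ∈ L

/-- An action-first language: all members alternate starting with an action,
i.e. the language is a subset of (UY)*(U+ε). -/
def IsActionFirst (L : Set (List (U ⊕ Y))) : Prop := ∀ s ∈ L, AltFrom true s

/-- An observation-first language: subset of (YU)*(Y+ε). -/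
def IsObservationFirst (L : Set (List (U ⊕ Y))) : Prop := ∀ s ∈ L, AltFrom false s

/-- An interaction language over the event space `U ⊕ Y`. -/
def IsInteractionLang (L : Set (List (U ⊕ Y))) : Prop :=
  PrefixClosed L ∧ (IsActionFirst L ∨ IsObservationFirst L)

/-- Two languages are akin when both are action-first or both are observation-first. -/
def Akin (LA LB : Set (List (U ⊕ Y))) : Prop :=
  (IsActionFirst LA ∧ IsActionFirst LB) ∨ (IsObservationFirst LA ∧ IsObservationFirst LB)

/-- The last element of the sequence is an action. -/
def ActionTerminal (s : List (U ⊕ Y)) : Prop := ∃ u : U, s.getLast? = some (Sum.inl u)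

/-- The last element of the sequence is an observation. -/
def ObservationTerminal (s : List (U ⊕ Y)) : Prop := ∃ y : Y, s.getLast? = some (Sum.inr y)

/-- `LA` is safe on `LB`. -/
def SafeLang (LA LB : Set (List (U ⊕ Y))) : Prop :=
  ∀ s ∈ LA ∩ LB,
    (ObservationTerminal s → ∀ e : U ⊕ Y, s ++ [e] ∈ LA → s ++ [e] ∈ LB) ∧
    (ActionTerminal s → ∀ e : U ⊕ Y, s ++ [e] ∈ LB → s ++ [e] ∈ LA)

/-- `LA` is finite on `LB`: the lengths of joint sequences are bounded. -/
def FiniteOn (LA LB : Set (List (U ⊕ Y))) : Prop :=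
  ∃ k : ℕ, ∀ s ∈ LA ∩ LB, s.length ≤ k

end InteractionLanguages

/-- A procrustean graph (p-graph) over action space `U` and observation space `Y`:
a finite edge-labeled bipartite directed graph; `label v w` is the set of events
labeling the edge from `v` to `w` (the empty set meaning there is no such edge). -/
structure PGraph (U Y : Type) where
  /-- The (finite) vertex type. -/
  V : Type
  /-- The vertex set is finite. -/
  [finV : Fintype V]
  /-- `true` on action vertices, `false` on observation vertices. -/
  isAct : V → Bool
  /-- Edge labels. -/
  label : V → V → Set (U ⊕ Y)
  /-- Edges from action vertices are labeled by actions and lead to observation vertices. -/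
  act_ok : ∀ v w : V, ∀ e ∈ label v w, isAct v = true → e.isLeft = true ∧ isAct w = false
  /-- Edges from observation vertices are labeled by observations and lead to action vertices. -/
  obs_ok : ∀ v w : V, ∀ e ∈ label v w, isAct v = false → e.isRight = true ∧ isAct w = true
  /-- The set of initial states. -/
  V0 : Set V
  V0_nonempty : V0.Nonempty
  /-- Whether the initial states are action vertices. -/
  startAct : Bool
  /-- Initial states are exclusively action states or exclusively observation states. -/
  V0_uniform : ∀ v ∈ V0, isAct v = startAct

attribute [instance] PGraph.finV

namespace PGraph

variable {U Y U' Y' : Type}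

/-- The event sequence `s` transitions in `G` from `v` to `w`. -/
inductive Trans (G : PGraph U Y) : G.V → List (U ⊕ Y) → G.V → Prop
  | nil (v : G.V) : Trans G v [] v
  | cons {v w x : G.V} {e : U ⊕ Y} {s : List (U ⊕ Y)} :
      e ∈ G.label v w → Trans G w s x → Trans G v (e :: s) x

/-- The induced language of a p-graph: the set of its executions. -/
def lang (G : PGraph U Y) : Set (List (U ⊕ Y)) :=
  {s | ∃ v ∈ G.V0, ∃ w, G.Trans v s w}

/-- A vertex reached by some execution. -/
def Reached (G : PGraph U Y) (w : G.V) : Prop :=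
  ∃ s : List (U ⊕ Y), ∃ v ∈ G.V0, G.Trans v s w

/-- A p-graph is in state-determined presentation: a unique initial state and,
at every vertex, labels of distinct outgoing edges pairwise disjoint. -/
def StateDetermined (G : PGraph U Y) : Prop :=
  (∃ v : G.V, G.V0 = {v}) ∧
  ∀ v w w' : G.V, w ≠ w' → G.label v w ∩ G.label v w' = ∅

/-- A p-graph is single-outputting: every action vertex reached by some execution
has at most one outgoing edge, and that edge's label is a singleton (action) set. -/
def SingleOutputting (G : PGraph U Y) : Prop :=
  ∀ v : G.V, G.isAct v = true → G.Reached v →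
    (∀ w w' : G.V, (G.label v w).Nonempty → (G.label v w').Nonempty → w = w') ∧
    (∀ w : G.V, (G.label v w).Nonempty → ∃ u : U, G.label v w = {Sum.inl u})

/-- A deterministic filter: every observation-terminal sequence of the induced
language has at most one successor in the language. -/
def DeterministicFilter (F : PGraph U Y) : Prop :=
  ∀ s ∈ F.lang, ObservationTerminal s →
    ∀ e e' : U ⊕ Y, s ++ [e] ∈ F.lang → s ++ [e'] ∈ F.lang → e = e'

/-- `IsTrace G v s l`: starting at `v`, the event sequence `s` can be traced along
the sequence of vertices `l` (which begins with `v`). -/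
inductive IsTrace (G : PGraph U Y) : G.V → List (U ⊕ Y) → List G.V → Prop
  | nil (v : G.V) : IsTrace G v [] [v]
  | cons {v w : G.V} {e : U ⊕ Y} {s : List (U ⊕ Y)} {l : List G.V} :
      e ∈ G.label v w → IsTrace G w s l → IsTrace G v (e :: s) (v :: l)

/-- A practicable filter: a single-outputting p-graph in which the validity of every
sequence of the induced language is the consequence of exactly one sequence of
state transitions. -/
def Practicable (F : PGraph U Y) : Prop :=
  F.SingleOutputting ∧
  ∀ s ∈ F.lang, ∃! l : List F.V, ∃ v0 ∈ F.V0, F.IsTrace v0 s l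

/-- `P` is safe on `W` (as p-graphs). -/
def SafeOn (P W : PGraph U Y) : Prop := SafeLang P.lang W.lang

/-- The event sequence `s` transitions in `P` from some initial state to some vertex
of the region `T`. -/
def ReachesVia (P : PGraph U Y) (T : Set P.V) (s : List (U ⊕ Y)) : Prop :=
  ∃ v0 ∈ P.V0, ∃ v ∈ T, P.Trans v0 s v

/-- The plan `(P, Pterm)` solves the planning problem `(W, Vgoal)`. -/
def Solves (P : PGraph U Y) (Pterm : Set P.V) (W : PGraph U Y) (Vgoal : Set W.V) : Prop :=
  Akin P.lang W.lang ∧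
  FiniteOn P.lang W.lang ∧
  SafeLang P.lang W.lang ∧
  (∀ s ∈ P.lang ∩ W.lang,
    ReachesVia P Pterm s ∨ ∃ t ∈ P.lang ∩ W.lang, s <+: t ∧ ReachesVia P Pterm t) ∧
  (∀ s ∈ P.lang ∩ W.lang, ReachesVia P Pterm s →
    ∀ w0 ∈ W.V0, ∀ w : W.V, W.Trans w0 s w → w ∈ Vgoal)

/-- The relation `R ⊆ V(P) × V(W)` relating `v` and `w` when some joint-execution
transitions in `P` from an initial state to `v` and in `W` from an initial state to `w`. -/
def HomRel (P W : PGraph U Y) (v : P.V) (w : W.V) : Prop :=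
  ∃ s ∈ P.lang ∩ W.lang, (∃ v0 ∈ P.V0, P.Trans v0 s v) ∧ (∃ w0 ∈ W.V0, W.Trans w0 s w)

/-- A homomorphic solution: a solution for which the relation `HomRel` is a function. -/
def HomomorphicSolution (P : PGraph U Y) (Pterm : Set P.V) (W : PGraph U Y)
    (Vgoal : Set W.V) : Prop :=
  Solves P Pterm W Vgoal ∧
  ∀ (v : P.V) (w w' : W.V), HomRel P W v w → HomRel P W v w' → w = w'

/-- The union `P ⊎ Q` of two p-graphs (whose initial states are of matching kind). -/
def union (P Q : PGraph U Y) (h : P.startAct = Q.startAct) : PGraph U Y where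
  V := P.V ⊕ Q.V
  isAct := Sum.elim P.isAct Q.isAct
  label := fun v w =>
    match v, w with
    | Sum.inl a, Sum.inl b => P.label a b
    | Sum.inr a, Sum.inr b => Q.label a b
    | _, _ => ∅
  act_ok := by
    rintro (a | a) (b | b) e he hv
    · exact P.act_ok a b e he hv
    · exact absurd he (Set.notMem_empty e)
    · exact absurd he (Set.notMem_empty e)
    · exact Q.act_ok a b e he hv
  obs_ok := by
    rintro (a | a) (b | b) e he hv
    · exact P.obs_ok a b e he hv
    · exact absurd he (Set.notMem_empty e)
    · exact absurd he (Set.notMem_empty e)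
    · exact Q.obs_ok a b e he hv
  V0 := Sum.inl '' P.V0 ∪ Sum.inr '' Q.V0
  V0_nonempty := by
    obtain ⟨v, hv⟩ := P.V0_nonempty
    exact ⟨Sum.inl v, Or.inl ⟨v, hv, rfl⟩⟩
  startAct := P.startAct
  V0_uniform := by
    rintro v (⟨a, ha, rfl⟩ | ⟨a, ha, rfl⟩)
    · exact P.V0_uniform a ha
    · exact (Q.V0_uniform a ha).trans h.symm

/-- The set of states reached in `P` from some initial state by the event sequence `s`. -/
def reachSet (P : PGraph U Y) (s : List (U ⊕ Y)) : Set P.V :=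
  {w | ∃ v0 ∈ P.V0, P.Trans v0 s w}

lemma trans_nil_eq {P : PGraph U Y} {v w : P.V} (h : P.Trans v [] w) : w = v := by
  cases h; rfl

lemma edge_flips {P : PGraph U Y} {v w : P.V} {e : U ⊕ Y} (he : e ∈ P.label v w) :
    P.isAct w = !P.isAct v := by
  cases hv : P.isAct v
  · simpa using (P.obs_ok v w e he hv).2
  · simpa using (P.act_ok v w e he hv).2

lemma trans_parity {P : PGraph U Y} {v w : P.V} {s : List (U ⊕ Y)}
    (h : P.Trans v s w) : P.isAct w = Bool.xor (P.isAct v) (decide (s.length % 2 = 1)) := by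
  induction h with
  | nil v => simp
  | cons he _ ih =>
    rename_i v' w' x' e s' _
    rw [ih, edge_flips he]
    rcases Nat.even_or_odd s'.length with hp | hp <;>
      rcases hb : P.isAct v' <;>
      simp_all [Nat.even_iff, Nat.odd_iff, List.length_cons, Nat.succ_mod_two_eq_one_iff,
        Nat.succ_mod_two_eq_zero_iff]
  
lemma reachSet_homog {P : PGraph U Y} {s : List (U ⊕ Y)} {v w : P.V}
    (hv : v ∈ P.reachSet s) (hw : w ∈ P.reachSet s) : P.isAct v = P.isAct w := by
  obtain ⟨v0, hv0, hv⟩ := hv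
  obtain ⟨w0, hw0, hw⟩ := hw
  rw [trans_parity hv, trans_parity hw, P.V0_uniform v0 hv0, P.V0_uniform w0 hw0]

lemma trans_append {P : PGraph U Y} {v x : P.V} {s t : List (U ⊕ Y)}
    (h : P.Trans v (s ++ t) x) : ∃ m : P.V, P.Trans v s m ∧ P.Trans m t x := by
  induction s generalizing v with
  | nil => exact ⟨v, Trans.nil v, h⟩
  | cons e s ih =>
    cases h with
    | cons he h' =>
      obtain ⟨m, h1, h2⟩ := ih h'
      exact ⟨m, Trans.cons he h1, h2⟩

lemma trans_single {P : PGraph U Y} {v x : P.V} {e : U ⊕ Y}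
    (h : P.Trans v [e] x) : e ∈ P.label v x := by
  cases h with
  | cons he h' =>
    rw [trans_nil_eq h']
    exact he

/-- The powerset determinization of a p-graph `P`: vertices are the subsets of
`V(P)` of the form `S(s) = reachSet P s` for `s ∈ L(P)`, the single initial state is
`S(ε) = V0(P)`, and the label of the edge from `S` to `T` contains `e` exactly when
`S = S(s)`, `T = S(s·e)` for some `s` with `s, s·e ∈ L(P)`. -/
noncomputable def determinize (P : PGraph U Y) : PGraph U Y where
  V := {S : Set P.V // ∃ s ∈ P.lang, P.reachSet s = S}
  finV := Fintype.ofFinite _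
  isAct := fun S => by classical exact decide (∃ v ∈ S.1, P.isAct v = true)
  label := fun S T =>
    {e | ∃ s ∈ P.lang, P.reachSet s = S.1 ∧ s ++ [e] ∈ P.lang ∧ P.reachSet (s ++ [e]) = T.1}
  act_ok := by
    classical
    rintro S T e ⟨s, hs, hS, hse, hT⟩ hv
    rw [decide_eq_true_iff] at hv
    obtain ⟨v, hvS, hvAct⟩ := hv
    obtain ⟨v0, hv0, x, hx⟩ := hse
    obtain ⟨m, hm, hmx⟩ := trans_append hx
    have hmS : m ∈ P.reachSet s := ⟨v0, hv0, hm⟩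
    have hedge : e ∈ P.label m x := trans_single hmx
    have hmAct : P.isAct m = true := by
      rw [← hS] at hvS
      rw [reachSet_homog hmS hvS, hvAct]
    obtain ⟨hL, hxA⟩ := P.act_ok m x e hedge hmAct
    refine ⟨hL, ?_⟩
    rw [decide_eq_false_iff_not]
    rintro ⟨w, hwT, hwAct⟩
    rw [← hT] at hwT
    have hxT : x ∈ P.reachSet (s ++ [e]) := ⟨v0, hv0, hx⟩
    rw [reachSet_homog hwT hxT, hxA] at hwAct
    exact Bool.false_ne_true hwAct
  obs_ok := by
    classical
    rintro S T e ⟨s, hs, hS, hse, hT⟩ hv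
    rw [decide_eq_false_iff_not] at hv
    obtain ⟨v0, hv0, x, hx⟩ := hse
    obtain ⟨m, hm, hmx⟩ := trans_append hx
    have hmS : m ∈ P.reachSet s := ⟨v0, hv0, hm⟩
    have hedge : e ∈ P.label m x := trans_single hmx
    have hmObs : P.isAct m = false := by
      rcases hma : P.isAct m with _ | _
      · rfl
      · exact absurd ⟨m, by rwa [hS] at hmS, hma⟩ hv
    obtain ⟨hR, hxA⟩ := P.obs_ok m x e hedge hmObs
    refine ⟨hR, ?_⟩
    rw [decide_eq_true_iff]
    refine ⟨x, ?_, hxA⟩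
    rw [← hT]
    exact ⟨v0, hv0, hx⟩
  V0 := {⟨P.reachSet [],
    ⟨[], ⟨P.V0_nonempty.choose, P.V0_nonempty.choose_spec,
      P.V0_nonempty.choose, Trans.nil _⟩, rfl⟩⟩}
  V0_nonempty := ⟨_, rfl⟩
  startAct := P.startAct
  V0_uniform := by
    classical
    rintro S hS
    rw [Set.mem_singleton_iff] at hS
    subst hS
    rcases hsa : P.startAct with _ | _
    · rw [decide_eq_false_iff_not]
      rintro ⟨v, ⟨v0, hv0, hv⟩, hvAct⟩
      rw [trans_nil_eq hv] at hvAct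
      rw [P.V0_uniform v0 hv0, hsa] at hvAct
      exact Bool.false_ne_true hvAct
    · rw [decide_eq_true_iff]
      obtain ⟨v, hv⟩ := P.V0_nonempty
      exact ⟨v, ⟨v, hv, Trans.nil v⟩, by rw [P.V0_uniform v hv, hsa]⟩

end PGraph
section Maps

variable {U Y U' Y' : Type}

/-- A label map: an action map together with an observation map, each assigning a
nonempty set of new events to each event. -/
structure LabelMap (U Y U' Y' : Type) where
  actMap : U → Set U'
  obsMap : Y → Set Y'
  actMap_nonempty : ∀ u : U, (actMap u).Nonempty
  obsMap_nonempty : ∀ y : Y, (obsMap y).Nonempty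

/-- Action of a label map on a single event. -/
def LabelMap.event (h : LabelMap U Y U' Y') : U ⊕ Y → Set (U' ⊕ Y')
  | Sum.inl u => Sum.inl '' h.actMap u
  | Sum.inr y => Sum.inr '' h.obsMap y

/-- Extension of a label map to sets of events: `h(S) = ⋃_{e ∈ S} h(e)`. -/
def LabelMap.setImage (h : LabelMap U Y U' Y') (S : Set (U ⊕ Y)) : Set (U' ⊕ Y') :=
  ⋃ e ∈ S, h.event e

/-- Extension of a label map to p-graphs: replace each edge label `S` with `h(S)`. -/
def PGraph.applyMap (h : LabelMap U Y U' Y') (G : PGraph U Y) : PGraph U' Y' where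
  V := G.V
  isAct := G.isAct
  label := fun v w => h.setImage (G.label v w)
  act_ok := by
    intro v w e' he' hv
    simp only [LabelMap.setImage, Set.mem_iUnion, exists_prop] at he'
    obtain ⟨e, he, hmem⟩ := he'
    have h1 := G.act_ok v w e he hv
    refine ⟨?_, h1.2⟩
    cases e with
    | inl u =>
      simp only [LabelMap.event] at hmem
      obtain ⟨u', _, rfl⟩ := hmem
      rfl
    | inr y => simp at h1
  obs_ok := by
    intro v w e' he' hv
    simp only [LabelMap.setImage, Set.mem_iUnion, exists_prop] at he'
    obtain ⟨e, he, hmem⟩ := he'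
    have h1 := G.obs_ok v w e he hv
    refine ⟨?_, h1.2⟩
    cases e with
    | inl u => simp at h1
    | inr y =>
      simp only [LabelMap.event] at hmem
      obtain ⟨y', _, rfl⟩ := hmem
      rfl
  V0 := G.V0
  V0_nonempty := G.V0_nonempty
  startAct := G.startAct
  V0_uniform := G.V0_uniform

/-- Action of an observation map on a single event (actions are left unchanged). -/
def obsEventImage (h : Y → Set Y') : U ⊕ Y → Set (U ⊕ Y')
  | Sum.inl u => {Sum.inl u}
  | Sum.inr y => Sum.inr '' h y

/-- `h_y(F)`: the p-graph `F` with each observation edge label `S` replaced by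
`⋃_{y ∈ S} h_y(y)` (action labels unchanged). -/
def PGraph.mapObs (G : PGraph U Y) (h : Y → Set Y') : PGraph U Y' where
  V := G.V
  isAct := G.isAct
  label := fun v w => ⋃ e ∈ G.label v w, obsEventImage h e
  act_ok := by
    intro v w e' he' hv
    simp only [Set.mem_iUnion, exists_prop] at he'
    obtain ⟨e, he, hmem⟩ := he'
    have h1 := G.act_ok v w e he hv
    refine ⟨?_, h1.2⟩
    cases e with
    | inl u =>
      simp only [obsEventImage, Set.mem_singleton_iff] at hmem
      subst hmem
      rfl
    | inr y => simp at h1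
  obs_ok := by
    intro v w e' he' hv
    simp only [Set.mem_iUnion, exists_prop] at he'
    obtain ⟨e, he, hmem⟩ := he'
    have h1 := G.obs_ok v w e he hv
    refine ⟨?_, h1.2⟩
    cases e with
    | inl u => simp at h1
    | inr y =>
      simp only [obsEventImage] at hmem
      obtain ⟨y', _, rfl⟩ := hmem
      rfl
  V0 := G.V0
  V0_nonempty := G.V0_nonempty
  startAct := G.startAct
  V0_uniform := G.V0_uniform

/-- `corrEvent h e f` holds when `f ∈ h_y(e)` for observations and `f = e` for actions. -/
def corrEvent (h : Y → Set Y') : U ⊕ Y → U ⊕ Y' → Prop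
  | Sum.inl u, Sum.inl u' => u' = u
  | Sum.inr y, Sum.inr y' => y' ∈ h y
  | _, _ => False

/-- `F` is equivalent to `F'` modulo the observation map `h`. -/
def EquivMod (F : PGraph U Y) (F' : PGraph U Y') (h : Y → Set Y') : Prop :=
  ∀ s ∈ F.lang, ObservationTerminal s →
    {u : U | s ++ [Sum.inl u] ∈ F.lang} =
      {u : U | ∃ t : List (U ⊕ Y'),
        List.Forall₂ (corrEvent h) s t ∧ t ++ [Sum.inl u] ∈ F'.lang}

/-- The observation map `h` is non-destructive on `F`. -/
def ObsNonDestructive (F : PGraph U Y) (h : Y → Set Y') : Prop :=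
  EquivMod F (F.mapObs h) h

end Maps

/-! On an execution `s`, the powerset determinization `P*` runs from its initial state to
the single vertex `S(s)`, the set of vertices of `P` that `s` reaches. Hence `L(P*) = L(P)`,
`s` reaches `V*_term` in `P*` iff it reaches `V_term` in `P`, and `s` reaches only `V*_goal`
in `W*` iff it reaches only `V_goal` in `W`. Every clause of `Solves` depends on the plan and
the problem only through these languages and reachability predicates. -/

namespace PGraph

variable {U Y : Type}

def stepSet (P : PGraph U Y) (A : Set P.V) (e : U ⊕ Y) : Set P.V :=
  {x | ∃ m ∈ A, e ∈ P.label m x}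

theorem Trans.append {P : PGraph U Y} {v m x : P.V} {s t : List (U ⊕ Y)}
    (h₁ : P.Trans v s m) (h₂ : P.Trans m t x) : P.Trans v (s ++ t) x := by
  induction h₁ with
  | nil => exact h₂
  | cons he _ ih => exact Trans.cons he (ih h₂)

theorem trans_append_singleton_iff {P : PGraph U Y} {v x : P.V} {s : List (U ⊕ Y)}
    {e : U ⊕ Y} : P.Trans v (s ++ [e]) x ↔ ∃ m, P.Trans v s m ∧ e ∈ P.label m x := by
  constructor
  · intro h
    obtain ⟨m, hm, hmx⟩ := trans_append h
    exact ⟨m, hm, trans_single hmx⟩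
  · rintro ⟨m, hm, he⟩
    exact hm.append (Trans.cons he (Trans.nil x))

theorem mem_lang_iff_reachSet_nonempty {P : PGraph U Y} {s : List (U ⊕ Y)} :
    s ∈ P.lang ↔ (P.reachSet s).Nonempty :=
  ⟨fun ⟨v, hv, w, h⟩ => ⟨w, v, hv, h⟩, fun ⟨w, v, hv, h⟩ => ⟨v, hv, w, h⟩⟩

theorem reachSet_append_singleton (P : PGraph U Y) (s : List (U ⊕ Y)) (e : U ⊕ Y) :
    P.reachSet (s ++ [e]) = P.stepSet (P.reachSet s) e := by
  ext x
  simp only [reachSet, stepSet, trans_append_singleton_iff]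
  constructor
  · rintro ⟨v₀, hv₀, m, hm, he⟩
    exact ⟨m, ⟨v₀, hv₀, hm⟩, he⟩
  · rintro ⟨m, ⟨v₀, hv₀, hm⟩, he⟩
    exact ⟨v₀, hv₀, m, hm, he⟩

theorem reachesVia_iff {P : PGraph U Y} {T : Set P.V} {s : List (U ⊕ Y)} :
    P.ReachesVia T s ↔ (P.reachSet s ∩ T).Nonempty :=
  ⟨fun ⟨v₀, hv₀, v, hv, h⟩ => ⟨v, ⟨v₀, hv₀, h⟩, hv⟩,
    fun ⟨v, ⟨v₀, hv₀, h⟩, hv⟩ => ⟨v₀, hv₀, v, hv, h⟩⟩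

theorem determinize_vertex_nonempty {P : PGraph U Y} (S : P.determinize.V) : S.1.Nonempty := by
  obtain ⟨s, hs, hS⟩ := S.2
  exact hS ▸ mem_lang_iff_reachSet_nonempty.mp hs

theorem mem_determinize_label_iff {P : PGraph U Y} {S T : P.determinize.V} {e : U ⊕ Y} :
    e ∈ P.determinize.label S T ↔ T.1 = P.stepSet S.1 e := by
  constructor
  · rintro ⟨s, -, hS, -, hT⟩
    rw [← hT, reachSet_append_singleton, hS]
  · intro hT
    obtain ⟨s, hs, hS⟩ := S.2
    have hse : P.reachSet (s ++ [e]) = T.1 := by rw [reachSet_append_singleton, hS, hT]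
    exact ⟨s, hs, hS, mem_lang_iff_reachSet_nonempty.mpr (hse ▸ determinize_vertex_nonempty T),
      hse⟩

theorem val_eq_reachSet_nil_of_mem_determinize_V0 {P : PGraph U Y} {S : P.determinize.V}
    (hS : S ∈ P.determinize.V0) : S.1 = P.reachSet [] := by
  rw [Set.mem_singleton_iff.mp hS]

theorem determinize_trans_iff {P : PGraph U Y} {S₀ T : P.determinize.V}
    (hS₀ : S₀ ∈ P.determinize.V0) (s : List (U ⊕ Y)) :
    P.determinize.Trans S₀ s T ↔ T.1 = P.reachSet s := by
  induction s using List.reverseRecOn generalizing T with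
  | nil =>
    rw [← val_eq_reachSet_nil_of_mem_determinize_V0 hS₀]
    exact ⟨fun h => by rw [trans_nil_eq h], fun h => Subtype.ext h ▸ Trans.nil S₀⟩
  | append_singleton s e ih =>
    simp only [trans_append_singleton_iff, ih, mem_determinize_label_iff,
      reachSet_append_singleton]
    constructor
    · rintro ⟨M, hM, hT⟩
      rwa [← hM]
    · intro hT
      have hs : s ∈ P.lang := by
        obtain ⟨x, m, hm, -⟩ := hT ▸ determinize_vertex_nonempty T
        exact mem_lang_iff_reachSet_nonempty.mpr ⟨m, hm⟩
      exact ⟨⟨P.reachSet s, s, hs, rfl⟩, rfl, hT⟩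

theorem lang_determinize (P : PGraph U Y) : P.determinize.lang = P.lang := by
  ext s
  obtain ⟨S₀, hS₀⟩ := P.determinize.V0_nonempty
  constructor
  · rintro ⟨S₀', hS₀', T, h⟩
    rw [mem_lang_iff_reachSet_nonempty, ← (determinize_trans_iff hS₀' s).mp h]
    exact determinize_vertex_nonempty T
  · intro hs
    exact ⟨S₀, hS₀, ⟨P.reachSet s, s, hs, rfl⟩, (determinize_trans_iff hS₀ s).mpr rfl⟩

theorem reachesVia_determinize_iff (P : PGraph U Y) (Pterm : Set P.V) (s : List (U ⊕ Y)) :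
    P.determinize.ReachesVia {S | (S.1 ∩ Pterm).Nonempty} s ↔ P.ReachesVia Pterm s := by
  rw [reachesVia_iff (P := P)]
  constructor
  · rintro ⟨S₀, hS₀, S, hS, h⟩
    exact (determinize_trans_iff hS₀ s).mp h ▸ hS
  · intro h
    obtain ⟨S₀, hS₀⟩ := P.determinize.V0_nonempty
    have hs : s ∈ P.lang := mem_lang_iff_reachSet_nonempty.mpr (h.mono Set.inter_subset_left)
    exact ⟨S₀, hS₀, ⟨P.reachSet s, s, hs, rfl⟩, h, (determinize_trans_iff hS₀ s).mpr rfl⟩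

theorem forall_determinize_trans_iff {W : PGraph U Y} {s : List (U ⊕ Y)} (hs : s ∈ W.lang)
    (p : Set W.V → Prop) :
    (∀ S₀ ∈ W.determinize.V0, ∀ S, W.determinize.Trans S₀ s S → p S.1) ↔ p (W.reachSet s) := by
  obtain ⟨S₀, hS₀⟩ := W.determinize.V0_nonempty
  constructor
  · intro h
    exact h S₀ hS₀ ⟨W.reachSet s, s, hs, rfl⟩ ((determinize_trans_iff hS₀ s).mpr rfl)
  · intro h S₀' hS₀' S hS
    rwa [(determinize_trans_iff hS₀' s).mp hS]

theorem forall_trans_mem_iff_reachSet_subset {W : PGraph U Y} {s : List (U ⊕ Y)}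
    {A : Set W.V} : (∀ w₀ ∈ W.V0, ∀ w, W.Trans w₀ s w → w ∈ A) ↔ W.reachSet s ⊆ A :=
  ⟨fun h _ ⟨w₀, hw₀, hw⟩ => h w₀ hw₀ _ hw, fun h w₀ hw₀ _ hw => h ⟨w₀, hw₀, hw⟩⟩

theorem solves_determinize_plan_iff (P : PGraph U Y) (Pterm : Set P.V) (W : PGraph U Y)
    (Vgoal : Set W.V) :
    Solves P.determinize {S | (S.1 ∩ Pterm).Nonempty} W Vgoal ↔ Solves P Pterm W Vgoal := by
  simp only [Solves, lang_determinize, reachesVia_determinize_iff]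

theorem solves_determinize_problem_iff (P : PGraph U Y) (Pterm : Set P.V) (W : PGraph U Y)
    (Vgoal : Set W.V) :
    Solves P Pterm W.determinize {S | S.1 ⊆ Vgoal} ↔ Solves P Pterm W Vgoal := by
  simp only [Solves, lang_determinize]
  refine and_congr_right' <| and_congr_right' <| and_congr_right' <| and_congr_right' ?_
  refine forall₂_congr fun s hs => imp_congr_right fun _ => ?_
  exact (forall_determinize_trans_iff hs.2 (· ⊆ Vgoal)).trans
    forall_trans_mem_iff_reachSet_subset.symm

end PGraph

theorem solves_iff_determinized_general
    {U Y : Type}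
    (P W : PGraph U Y) (Pterm : Set P.V) (Vgoal : Set W.V) :
    ((PGraph.Solves P Pterm W Vgoal ↔
        PGraph.Solves P.determinize {S : P.determinize.V | (S.1 ∩ Pterm).Nonempty}
          W Vgoal) ∧
      (PGraph.Solves P Pterm W Vgoal ↔
        PGraph.Solves P Pterm
          W.determinize {S : W.determinize.V | S.1 ⊆ Vgoal}) ∧
      (PGraph.Solves P Pterm W Vgoal ↔
        PGraph.Solves P.determinize {S : P.determinize.V | (S.1 ∩ Pterm).Nonempty}
          W.determinize {S : W.determinize.V | S.1 ⊆ Vgoal})) := by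
  refine ⟨(PGraph.solves_determinize_plan_iff P Pterm W Vgoal).symm,
    (PGraph.solves_determinize_problem_iff P Pterm W Vgoal).symm, ?_⟩
  rw [PGraph.solves_determinize_plan_iff P Pterm W.determinize,
    PGraph.solves_determinize_problem_iff]

/-- solubility is preserved by powerset determinization of the plan
and/or of the planning problem. -/
theorem solves_iff_determinized
    {U Y : Type} [Nonempty U] [Nonempty Y]
    (P W : PGraph U Y) (Pterm : Set P.V) (Vgoal : Set W.V)
    (hakin : Akin P.lang W.lang) :
    ((PGraph.Solves P Pterm W Vgoal ↔
        PGraph.Solves P.determinize {S : P.determinize.V | (S.1 ∩ Pterm).Nonempty}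
          W Vgoal) ∧
      (PGraph.Solves P Pterm W Vgoal ↔
        PGraph.Solves P Pterm
          W.determinize {S : W.determinize.V | S.1 ⊆ Vgoal}) ∧
      (PGraph.Solves P Pterm W Vgoal ↔
        PGraph.Solves P.determinize {S : P.determinize.V | (S.1 ∩ Pterm).Nonempty}
          W.determinize {S : W.determinize.V | S.1 ⊆ Vgoal})) :=
  solves_iff_determinized_general P W Pterm Vgoal
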